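/- The family of functions {Φ_{a,b}}_{0 < a < b}, where Φ_{a,b} is the circular transform of the right triangle T(a,b) = conv((0,0),(a,0),(a,√(b²−a²))), is linearly independent on (0, +∞): any finite vanishing linear combination Σ c_{a,b} Φ_{a,b} ≡ 0 on (0,∞) has all coefficients zero. -/

import Mathlib

open Real MeasureTheory

noncomputable abbrev E2 : Type := EuclideanSpace ℝ (Fin 2)

/-- The point `(a, b)` of the Euclidean plane. -/
noncomputable def pt2 (a b : ℝ) : E2 := (EuclideanSpace.equiv (Fin 2) ℝ).symm ![a, b]

/-- The circular transform of a set `S ⊆ ℝ²`: `R_S(ρ) = ∫₀^{2π} 1_S(ρ cos θ, ρ sin θ) dθ`. -/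
noncomputable def circTransform (S : Set E2) (ρ : ℝ) : ℝ :=
  ∫ θ in (0 : ℝ)..(2 * π), S.indicator (fun _ => (1 : ℝ)) (pt2 (ρ * cos θ) (ρ * sin θ))

/-- The right triangle `T(a,b) = conv((0,0), (a,0), (a, √(b² − a²)))`. -/
noncomputable def Tri (a b : ℝ) : Set E2 :=
  convexHull ℝ {pt2 0 0, pt2 a 0, pt2 a (Real.sqrt (b ^ 2 - a ^ 2))}

/-- `Φ_{a,b}`, the circular transform of the right triangle `T(a,b)`. -/
noncomputable def Phi (a b ρ : ℝ) : ℝ := circTransform (Tri a b) ρ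

/-! Each circle of radius `ρ` meets `T(a,b)` in the arc of angles
`[arccos (a/ρ), arccos (a/b)]`, so `Φ_{a,b}(ρ) = max (arccos (a/b) - arccos (a/ρ)) 0`, which
vanishes for `ρ ≥ b`. Let `B` be the largest `b` carrying a nonzero coefficient. Just below `B`
only the triangles with `b = B` contribute, so `∑ c_a arccos (a/ρ)` is constant there;
differentiating and substituting `t = ρ²` gives `∑ c_a a (t - a²)^(-1/2) = 0` on an interval.
The derivatives of all orders at one point form a Vandermonde system in the distinct nodes
`(t - a²)⁻¹`, so these coefficients vanish, a contradiction. -/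

@[simp] theorem pt2_apply_zero (x y : ℝ) : pt2 x y 0 = x := rfl

@[simp] theorem pt2_apply_one (x y : ℝ) : pt2 x y 1 = y := rfl

theorem convexHull_triangle_subset {a h : ℝ} (ha : 0 ≤ a) (hh : 0 ≤ h) :
    convexHull ℝ {pt2 0 0, pt2 a 0, pt2 a h} ⊆
      {P : E2 | 0 ≤ P 1 ∧ a * P 1 ≤ h * P 0 ∧ P 0 ≤ a} := by
  refine convexHull_min ?_ ?_
  · rintro P (rfl | rfl | rfl) <;> simp [ha, hh, mul_comm, mul_nonneg]
  · rintro P ⟨hP₁, hP₂, hP₃⟩ Q ⟨hQ₁, hQ₂, hQ₃⟩ s t hs ht hst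
    refine ⟨?_, ?_, ?_⟩ <;>
      simp only [WithLp.ofLp_add, WithLp.ofLp_smul, Pi.add_apply, Pi.smul_apply, smul_eq_mul] <;>
      nlinarith

theorem pt2_mem_convexHull_triangle {a h x y : ℝ} (ha : 0 < a) (hh : 0 < h) (hy : 0 ≤ y)
    (hxy : a * y ≤ h * x) (hx : x ≤ a) : pt2 x y ∈ convexHull ℝ {pt2 0 0, pt2 a 0, pt2 a h} := by
  have hw : ∀ i ∈ Finset.univ, 0 ≤ ![1 - x / a, x / a - y / h, y / h] i := by
    intro i _
    fin_cases i <;> simp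
    · rwa [div_le_one ha]
    · rw [div_le_div_iff₀ hh ha]; linarith
    · positivity
  have hcomb : ∑ i, ![1 - x / a, x / a - y / h, y / h] i • ![pt2 0 0, pt2 a 0, pt2 a h] i =
      pt2 x y := by
    ext i
    fin_cases i <;> simp [Fin.sum_univ_three] <;> field_simp
    ring
  rw [← hcomb]
  exact (convex_convexHull ℝ _).sum_mem hw (by simp [Fin.sum_univ_three])
    fun i _ => subset_convexHull ℝ _ (by fin_cases i <;> simp)

theorem pt2_mem_convexHull_triangle_iff {a h x y : ℝ} (ha : 0 < a) (hh : 0 < h) :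
    pt2 x y ∈ convexHull ℝ {pt2 0 0, pt2 a 0, pt2 a h} ↔ 0 ≤ y ∧ a * y ≤ h * x ∧ x ≤ a :=
  ⟨fun hP => convexHull_triangle_subset ha.le hh.le hP,
    fun ⟨hy, hxy, hx⟩ => pt2_mem_convexHull_triangle ha hh hy hxy hx⟩

theorem sin_nonneg_and_sin_sub_nonneg_iff {α θ : ℝ} (hα₀ : 0 < α) (hα : α < π) (hθ₀ : 0 ≤ θ)
    (hθ : θ < 2 * π) : 0 ≤ sin θ ∧ 0 ≤ sin (α - θ) ↔ θ ≤ α := by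
  constructor
  · rintro ⟨hsin, hsin_sub⟩
    by_contra! hαθ
    rcases le_or_gt θ π with hθπ | hθπ
    · exact (sin_neg_of_neg_of_neg_pi_lt (by linarith) (by linarith)).not_ge hsin_sub
    · have := sin_pos_of_pos_of_lt_pi (x := θ - π) (by linarith) (by linarith)
      rw [sin_sub_pi] at this
      linarith
  · intro hθα
    exact ⟨sin_nonneg_of_nonneg_of_le_pi hθ₀ (by linarith),
      sin_nonneg_of_nonneg_of_le_pi (by linarith) (by linarith)⟩

theorem arccos_le_iff_cos_le {x θ : ℝ} (hx : -1 ≤ x) (hθ₀ : 0 ≤ θ) (hθ : θ ≤ π) :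
    arccos x ≤ θ ↔ cos θ ≤ x := by
  constructor
  · intro h
    rcases le_or_gt x 1 with hx₁ | hx₁
    · calc cos θ ≤ cos (arccos x) := cos_le_cos_of_nonneg_of_le_pi (arccos_nonneg x) hθ h
        _ = x := cos_arccos hx hx₁
    · exact (cos_le_one θ).trans hx₁.le
  · intro h
    calc arccos x ≤ arccos (cos θ) := arccos_le_arccos h
      _ = θ := arccos_cos hθ₀ hθ

theorem polar_mem_Tri_iff {a b ρ θ : ℝ} (ha : 0 < a) (hab : a < b) (hρ : 0 < ρ) (hθ₀ : 0 ≤ θ)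
    (hθ : θ < 2 * π) :
    pt2 (ρ * cos θ) (ρ * sin θ) ∈ Tri a b ↔ θ ∈ Set.Icc (arccos (a / ρ)) (arccos (a / b)) := by
  have hb : 0 < b := ha.trans hab
  have hh : 0 < √(b ^ 2 - a ^ 2) := sqrt_pos.2 (by nlinarith)
  set α := arccos (a / b)
  have hα₀ : 0 < α := arccos_pos.2 ((div_lt_one hb).2 hab)
  have hα : α < π / 2 := arccos_lt_pi_div_two.2 (div_pos ha hb)
  have hsin_sub : sin (α - θ) = (√(b ^ 2 - a ^ 2) * (ρ * cos θ) - a * (ρ * sin θ)) / (b * ρ) := by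
    rw [sin_sub, cos_arccos (by linarith [div_pos ha hb]) ((div_lt_one hb).2 hab).le, sin_arccos,
      show 1 - (a / b) ^ 2 = (b ^ 2 - a ^ 2) / b ^ 2 by field_simp, sqrt_div' _ (sq_nonneg b),
      sqrt_sq hb.le]
    field_simp
  have hbelow : a * (ρ * sin θ) ≤ √(b ^ 2 - a ^ 2) * (ρ * cos θ) ↔ 0 ≤ sin (α - θ) := by
    rw [hsin_sub, le_div_iff₀ (mul_pos hb hρ), zero_mul, sub_nonneg]
  rw [Tri, pt2_mem_convexHull_triangle_iff ha hh, Set.mem_Icc, mul_nonneg_iff_of_pos_left hρ,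
    hbelow, ← and_assoc, sin_nonneg_and_sin_sub_nonneg_iff hα₀ (by linarith) hθ₀ hθ]
  have hcos : θ ≤ π → (ρ * cos θ ≤ a ↔ arccos (a / ρ) ≤ θ) := fun hθπ => by
    rw [arccos_le_iff_cos_le (by linarith [div_pos ha hρ]) hθ₀ hθπ, le_div_iff₀ hρ, mul_comm]
  exact ⟨fun ⟨hθα, hρa⟩ => ⟨(hcos (by linarith)).1 hρa, hθα⟩,
    fun ⟨hθ₁, hθα⟩ => ⟨hθα, (hcos (by linarith)).2 hθ₁⟩⟩

theorem intervalIntegral_indicator_Icc_one {x y T : ℝ} (hx : 0 ≤ x) (hyT : y ≤ T) (hT : 0 ≤ T) :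
    ∫ θ in (0 : ℝ)..T, (Set.Icc x y).indicator (fun _ => (1 : ℝ)) θ = max (y - x) 0 := by
  rw [intervalIntegral.integral_of_le hT, ← integral_Icc_eq_integral_Ioc,
    setIntegral_indicator measurableSet_Icc, setIntegral_const, smul_eq_mul, mul_one,
    Set.inter_eq_right.2 (Set.Icc_subset_Icc hx hyT), Real.volume_real_Icc]

-- No case split at `ρ ≤ a` is needed: there `arccos (a / ρ) = 0`, as `arccos` is `0` on `[1, ∞)`.
theorem Phi_eq {a b ρ : ℝ} (ha : 0 < a) (hab : a < b) (hρ : 0 < ρ) :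
    Phi a b ρ = max (arccos (a / b) - arccos (a / ρ)) 0 := by
  have hα : arccos (a / b) < 2 * π := by
    linarith [arccos_lt_pi_div_two.2 (div_pos ha (ha.trans hab)), pi_pos]
  calc Phi a b ρ
      = ∫ θ in (0 : ℝ)..2 * π,
          (Set.Icc (arccos (a / ρ)) (arccos (a / b))).indicator (fun _ => (1 : ℝ)) θ := by
        rw [Phi, circTransform, intervalIntegral.integral_of_le two_pi_pos.le,
          intervalIntegral.integral_of_le two_pi_pos.le, integral_Ioc_eq_integral_Ioo,
          integral_Ioc_eq_integral_Ioo]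
        refine setIntegral_congr_fun measurableSet_Ioo fun θ hθ => ?_
        simp only [Set.indicator, polar_mem_Tri_iff ha hab hρ hθ.1.le hθ.2]
    _ = max (arccos (a / b) - arccos (a / ρ)) 0 :=
        intervalIntegral_indicator_Icc_one (arccos_nonneg _) hα.le two_pi_pos.le

theorem Phi_eq_zero_of_le {a b ρ : ℝ} (ha : 0 < a) (hab : a < b) (hbρ : b ≤ ρ) :
    Phi a b ρ = 0 := by
  have hb := ha.trans hab
  rw [Phi_eq ha hab (hb.trans_le hbρ), max_eq_right]
  exact sub_nonpos.2 (arccos_le_arccos (div_le_div_of_nonneg_left ha.le hb hbρ))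

theorem Phi_eq_of_le {a b ρ : ℝ} (ha : 0 < a) (hab : a < b) (hρ : 0 < ρ) (hρb : ρ ≤ b) :
    Phi a b ρ = arccos (a / b) - arccos (a / ρ) := by
  rw [Phi_eq ha hab hρ, max_eq_left]
  exact sub_nonneg.2 (arccos_le_arccos (div_le_div_of_nonneg_left ha.le hρ hρb))

theorem eq_zero_of_forall_sum_mul_pow_eq_zero {ι K : Type*} [Field K]
    {S : Finset ι} {e x : ι → K} (hx : Set.InjOn x S)
    (h : ∀ k : ℕ, ∑ i ∈ S, e i * x i ^ k = 0) : ∀ i ∈ S, e i = 0 := by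
  classical
  have heval : ∀ P : Polynomial K, ∑ i ∈ S, e i * P.eval (x i) = 0 := by
    intro P
    simp_rw [Polynomial.eval_eq_sum_range, Finset.mul_sum]
    rw [Finset.sum_comm]
    refine Finset.sum_eq_zero fun k _ => ?_
    simp_rw [mul_left_comm (e _), ← Finset.mul_sum, h, mul_zero]
  intro i hi
  have := heval (Lagrange.basis S x i)
  rwa [Finset.sum_eq_single_of_mem i hi fun j hj hji => by
      rw [Lagrange.eval_basis_of_ne hji.symm hj, mul_zero],
    Lagrange.eval_basis_self hx hi, mul_one] at this

theorem sum_mul_eq_zero_of_hasDerivAt_of_sum_eqOn_const {ι 𝕜 : Type*} [NontriviallyNormedField 𝕜]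
    {S : Finset ι} {e : ι → 𝕜} {g g' : ι → 𝕜 → 𝕜} {U : Set 𝕜} {K : 𝕜} (hU : IsOpen U)
    (hg : ∀ i ∈ S, ∀ t ∈ U, HasDerivAt (g i) (g' i t) t)
    (h : ∀ t ∈ U, ∑ i ∈ S, e i * g i t = K) {t : 𝕜} (ht : t ∈ U) :
    ∑ i ∈ S, e i * g' i t = 0 := by
  have hsum : HasDerivAt (fun t => ∑ i ∈ S, e i * g i t) (∑ i ∈ S, e i * g' i t) t :=
    HasDerivAt.fun_sum fun i hi => (hg i hi t ht).const_mul (e i)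
  exact hsum.unique <| (hasDerivAt_const t K).congr_of_eventuallyEq <|
    Filter.eventually_of_mem (hU.mem_nhds ht) h

theorem eq_zero_of_sum_mul_rpow_sub_eq_zero {ι : Type*} {S : Finset ι}
    {e s : ι → ℝ} {r u v : ℝ} (hs : Set.InjOn s S) (hr : ∀ n : ℕ, r ≠ n) (huv : u < v)
    (hsu : ∀ i ∈ S, s i ≤ u) (h : ∀ t ∈ Set.Ioo u v, ∑ i ∈ S, e i * (t - s i) ^ r = 0) :
    ∀ i ∈ S, e i = 0 := by
  have hpos : ∀ t ∈ Set.Ioo u v, ∀ i ∈ S, 0 < t - s i := fun t ht i hi => by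
    linarith [ht.1, hsu i hi]
  have hderiv : ∀ k : ℕ, ∀ t ∈ Set.Ioo u v,
      ∑ i ∈ S, (e i * ∏ j ∈ Finset.range k, (r - j)) * (t - s i) ^ (r - k) = 0 := by
    intro k
    induction k with
    | zero => simpa using h
    | succ k ih =>
      intro t ht
      have := sum_mul_eq_zero_of_hasDerivAt_of_sum_eqOn_const isOpen_Ioo
        (fun i hi t ht => ((hasDerivAt_id t).sub_const (s i)).rpow_const
          (Or.inl (hpos t ht i hi).ne')) ih ht
      convert this using 2 with i
      rw [id, Finset.prod_range_succ, Nat.cast_succ, ← sub_sub]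
      ring
  obtain ⟨t, ht⟩ : (Set.Ioo u v).Nonempty := Set.nonempty_Ioo.2 huv
  have hpow : ∀ k : ℕ, ∑ i ∈ S, e i * (t - s i) ^ r * ((t - s i)⁻¹) ^ k = 0 := by
    intro k
    have hk : ∏ j ∈ Finset.range k, (r - j) ≠ 0 :=
      Finset.prod_ne_zero_iff.2 fun j _ => sub_ne_zero.2 (hr j)
    calc ∑ i ∈ S, e i * (t - s i) ^ r * ((t - s i)⁻¹) ^ k
        = (∏ j ∈ Finset.range k, (r - j))⁻¹ *
            ∑ i ∈ S, (e i * ∏ j ∈ Finset.range k, (r - j)) * (t - s i) ^ (r - k) := by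
          rw [Finset.mul_sum]
          refine Finset.sum_congr rfl fun i hi => ?_
          rw [rpow_sub_natCast (hpos t ht i hi).ne', inv_pow]
          field_simp
      _ = 0 := by rw [hderiv k t ht, mul_zero]
  have hx : Set.InjOn (fun i => (t - s i)⁻¹) S :=
    (inv_injective.comp (sub_right_injective (G := ℝ) (b := t))).comp_injOn hs
  intro i hi
  have := eq_zero_of_forall_sum_mul_pow_eq_zero hx hpow i hi
  exact (mul_eq_zero.1 this).resolve_right (rpow_pos_of_pos (hpos t ht i hi) r).ne'

theorem hasDerivAt_arccos_div {a ρ : ℝ} (h : |a| < ρ) :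
    HasDerivAt (fun ρ => arccos (a / ρ)) (a / ρ * (ρ ^ 2 - a ^ 2) ^ (-(1 / 2) : ℝ)) ρ := by
  have hρ : 0 < ρ := (abs_nonneg a).trans_lt h
  obtain ⟨h₁, h₂⟩ := abs_lt.1 h
  have hd : 0 < ρ ^ 2 - a ^ 2 := by nlinarith
  have hx₁ : a / ρ ≠ -1 := by
    rw [ne_eq, div_eq_iff hρ.ne']; linarith
  have hx₂ : a / ρ ≠ 1 := by
    rw [ne_eq, div_eq_iff hρ.ne']; linarith
  have hsqrt : √(1 - (a / ρ) ^ 2) = √(ρ ^ 2 - a ^ 2) / ρ := by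
    rw [show 1 - (a / ρ) ^ 2 = (ρ ^ 2 - a ^ 2) / ρ ^ 2 by field_simp, sqrt_div hd.le,
      sqrt_sq hρ.le]
  have := sqrt_pos.2 hd
  refine ((hasDerivAt_arccos hx₁ hx₂).comp ρ
    ((hasDerivAt_inv hρ.ne').const_mul a)).congr_deriv ?_
  rw [hsqrt, rpow_neg hd.le, ← sqrt_eq_rpow]
  field_simp

theorem eq_zero_of_sum_mul_arccos_div_eqOn_const {ι : Type*} {S : Finset ι}
    {c a : ι → ℝ} {L B K : ℝ} (ha : Set.InjOn a S) (ha₀ : ∀ i ∈ S, 0 < a i)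
    (haL : ∀ i ∈ S, a i ≤ L) (hLB : L < B)
    (h : ∀ ρ ∈ Set.Ioo L B, ∑ i ∈ S, c i * arccos (a i / ρ) = K) : ∀ i ∈ S, c i = 0 := by
  intro i hi
  have hL : 0 < L := (ha₀ i hi).trans_le (haL i hi)
  have hderiv : ∀ ρ ∈ Set.Ioo L B,
      ∑ j ∈ S, c j * (a j / ρ * (ρ ^ 2 - a j ^ 2) ^ (-(1 / 2) : ℝ)) = 0 :=
    fun ρ hρ => sum_mul_eq_zero_of_hasDerivAt_of_sum_eqOn_const isOpen_Ioo
      (fun j hj ρ hρ => hasDerivAt_arccos_div <| by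
        rw [abs_of_pos (ha₀ j hj)]; exact (haL j hj).trans_lt hρ.1) h hρ
  have hrpow : ∀ t ∈ Set.Ioo (L ^ 2) (B ^ 2),
      ∑ j ∈ S, (c j * a j) * (t - a j ^ 2) ^ (-(1 / 2) : ℝ) = 0 := by
    intro t ht
    have ht₀ : 0 < t := (pow_pos hL 2).trans ht.1
    have hsqrt : √t ∈ Set.Ioo L B :=
      ⟨(lt_sqrt hL.le).2 ht.1, (sqrt_lt' (hL.trans hLB)).2 ht.2⟩
    have := hderiv √t hsqrt
    rw [sq_sqrt ht₀.le] at this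
    calc ∑ j ∈ S, (c j * a j) * (t - a j ^ 2) ^ (-(1 / 2) : ℝ)
        = √t * ∑ j ∈ S, c j * (a j / √t * (t - a j ^ 2) ^ (-(1 / 2) : ℝ)) := by
          rw [Finset.mul_sum]
          refine Finset.sum_congr rfl fun j _ => ?_
          have := sqrt_pos.2 ht₀
          field_simp
      _ = 0 := by rw [this, mul_zero]
  have hsq : Set.InjOn (fun j => a j ^ 2) S := fun j hj k hk hjk =>
    ha hj hk <| (sq_eq_sq₀ (ha₀ j hj).le (ha₀ k hk).le).1 hjk
  have hr : ∀ n : ℕ, (-(1 / 2) : ℝ) ≠ n := fun n => by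
    have := n.cast_nonneg (α := ℝ); intro h; linarith
  have := eq_zero_of_sum_mul_rpow_sub_eq_zero hsq hr (pow_lt_pow_left₀ hLB hL.le two_ne_zero)
    (fun j hj => pow_le_pow_left₀ (ha₀ j hj).le (haL j hj) 2) hrpow i hi
  exact (mul_eq_zero.1 this).resolve_right (ha₀ i hi).ne'

theorem coeff_eq_zero_of_snd_eq_max {F : Finset (ℝ × ℝ)} {c : ℝ × ℝ → ℝ} {B : ℝ}
    (hF : ∀ p ∈ F, 0 < p.1 ∧ p.1 < p.2)
    (hzero : ∀ ρ : ℝ, 0 < ρ → ∑ p ∈ F, c p * Phi p.1 p.2 ρ = 0) (hB : ∀ p ∈ F, p.2 ≤ B) :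
    ∀ p ∈ F, p.2 = B → c p = 0 := by
  classical
  intro p₀ hp₀ hp₀B
  -- On `(L, B)` the triangles with `b < B` miss the circle and those with `b = B` all meet it.
  let f : ℝ × ℝ → ℝ := fun p => if p.2 = B then p.1 else p.2
  set L := F.sup' ⟨p₀, hp₀⟩ f
  have hfL : ∀ p ∈ F, f p ≤ L := fun p hp => F.le_sup' f hp
  have hLB : L < B := (Finset.sup'_lt_iff _).2 fun p hp => by
    by_cases hpB : p.2 = B
    · simpa [f, hpB] using (hF p hp).2
    · simpa [f, hpB] using (hB p hp).lt_of_ne hpB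
  have hG : ∀ ρ ∈ Set.Ioo L B, ∑ p ∈ F with p.2 = B, c p * arccos (p.1 / ρ) =
      ∑ p ∈ F with p.2 = B, c p * arccos (p.1 / B) := by
    intro ρ hρ
    have hρ₀ : 0 < ρ :=
      (hF p₀ hp₀).1.trans_le (by simpa [f, hp₀B] using hfL p₀ hp₀) |>.trans hρ.1
    have hterm : ∀ p ∈ F, c p * Phi p.1 p.2 ρ =
        if p.2 = B then c p * arccos (p.1 / B) - c p * arccos (p.1 / ρ) else 0 := by
      intro p hp
      split_ifs with hpB
      · rw [Phi_eq_of_le (hF p hp).1 (hF p hp).2 hρ₀ (hpB ▸ hρ.2.le), hpB, mul_sub]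
      · have : p.2 ≤ L := by simpa [f, hpB] using hfL p hp
        rw [Phi_eq_zero_of_le (hF p hp).1 (hF p hp).2 (this.trans hρ.1.le), mul_zero]
    have := hzero ρ hρ₀
    rw [Finset.sum_congr rfl hterm, ← Finset.sum_filter, Finset.sum_sub_distrib,
      sub_eq_zero] at this
    exact this.symm
  refine eq_zero_of_sum_mul_arccos_div_eqOn_const (fun p hp q hq hpq => ?_)
    (fun p hp => (hF p (Finset.mem_filter.1 hp).1).1)
    (fun p hp => by simpa [f, (Finset.mem_filter.1 hp).2] using hfL p (Finset.mem_filter.1 hp).1)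
    hLB hG p₀ (Finset.mem_filter.2 ⟨hp₀, hp₀B⟩)
  exact Prod.ext hpq ((Finset.mem_filter.1 hp).2.trans (Finset.mem_filter.1 hq).2.symm)

/-- The family `{Φ_{a,b}}_{0 < a < b}` is linearly independent on `(0, ∞)`: any finite
vanishing linear combination `∑ c_{a,b} Φ_{a,b} ≡ 0` on `(0, ∞)` has all coefficients
zero. -/
theorem stmt_16 (F : Finset (ℝ × ℝ)) (c : ℝ × ℝ → ℝ)
    (hF : ∀ p ∈ F, 0 < p.1 ∧ p.1 < p.2)
    (hzero : ∀ ρ : ℝ, 0 < ρ → ∑ p ∈ F, c p * Phi p.1 p.2 ρ = 0) :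
    ∀ p ∈ F, c p = 0 := by
  classical
  by_contra! ⟨q, hq, hcq⟩
  set F' := F.filter (c · ≠ 0)
  obtain ⟨p, hp, hmax⟩ := F'.exists_max_image Prod.snd ⟨q, Finset.mem_filter.2 ⟨hq, hcq⟩⟩
  have hzero' : ∀ ρ : ℝ, 0 < ρ → ∑ p ∈ F', c p * Phi p.1 p.2 ρ = 0 := fun ρ hρ => by
    rw [Finset.sum_filter_of_ne fun p _ hp => left_ne_zero_of_mul hp]
    exact hzero ρ hρ
  exact (Finset.mem_filter.1 hp).2 <| coeff_eq_zero_of_snd_eq_max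
    (fun p hp => hF p (Finset.mem_filter.1 hp).1) hzero' hmax p hp rfl
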